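/- Let b_0 ≤ b_1 ≤ ... ≤ b_k and a_0 < a_1 < ... < a_k be integers with b_i - b_0 ≤ a_i - a_0 for all i (i.e., all slopes from (a_0,b_0) are at most 1). Then Area((a_i,b_i)_i) := Σ_{t=0}^{k-1} (a_{t+1}-a_t)(b_{t+1}+b_t-2b_0) ≤ 2·(a_k - a_0)·(b_k - b_0) - (b_k - b_0)². -/
import Mathlib


/-- If all slopes from (a_0, b_0) are at most 1, the area under the path is bounded by
2(a_k - a_0)(b_k - b_0) - (b_k - b_0)². -/
theorem area_le_trapezoid (k : ℕ) (a b : ℕ → ℤ)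
    (ha : ∀ i j, i < j → j ≤ k → a i < a j)
    (hb : ∀ i j, i ≤ j → j ≤ k → b i ≤ b j)
    (hslope : ∀ i ≤ k, b i - b 0 ≤ a i - a 0) :
    ∑ t ∈ Finset.range k, (a (t + 1) - a t) * (b (t + 1) + b t - 2 * b 0)
      ≤ 2 * (a k - a 0) * (b k - b 0) - (b k - b 0) ^ 2 := by
  suffices h : ∀ n ≤ k, ∑ t ∈ Finset.range n, (a (t + 1) - a t) * (b (t + 1) + b t - 2 * b 0)
      ≤ 2 * (a n - a 0) * (b n - b 0) - (b n - b 0) ^ 2 from h k le_rfl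
  intro n hn
  induction n with
  | zero => simp
  | succ m ih =>
    have hm : m ≤ k := le_of_lt (Nat.lt_of_succ_le hn)
    have h1 : a m < a (m + 1) := ha m (m + 1) (Nat.lt_succ_self m) hn
    have h2 : b m ≤ b (m + 1) := hb m (m + 1) (Nat.le_succ m) hn
    have h3 : b 0 ≤ b m := hb 0 m (Nat.zero_le m) hm
    have h4 : b m - b 0 ≤ a m - a 0 := hslope m hm
    have h5 : b (m + 1) - b 0 ≤ a (m + 1) - a 0 := hslope (m + 1) hn
    have := ih hm
    rw [Finset.sum_range_succ]
    nlinarith [mul_nonneg (sub_nonneg.2 h2) (sub_nonneg.2 h3),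
      mul_nonneg (sub_nonneg.2 h2) (sub_nonneg.2 h4),
      mul_nonneg (sub_nonneg.2 h2) (sub_nonneg.2 h5)]
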